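/- arXiv:math/0601701 — 4 statements merged into one kernel-verified Lean document; each statement's English description precedes it below -/
import Mathlib

section
/- Let λ ∈ ℝ with 0 < λ < 1, ν ≠ 0, δ ≠ 0, and n ≥ 1 a natural number with δ n ν ∉ [−4, 0]. Then every complex eigenvalue z of the matrix Π · Df_n (with Π, Df_n as in the Arnold-model situation: Π has rows (1,0,0,0),(0,1,0,0),(δ,0,1,0),(0,0,0,1) and Df_n has rows (1,0,nν,0),(0,λ^n,0,0),(0,0,1,0),(0,0,0,λ^{-n})) satisfies |z| ≠ 1, i.e. the matrix is hyperbolic. -/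
open Matrix Polynomial

/-!
`Π · Df_n` preserves the splitting `span(e₁, e₃) ⊕ span(e₂, e₄)`: on the first plane it acts by a
`2 × 2` block of trace `δnν + 2` and determinant `1`, on the second by `diag(λⁿ, λ⁻ⁿ)`. Hence its
characteristic polynomial is a product of two quadratics `x² - a x + 1` with `|a| > 2`. A root `z`
of such a quadratic with `|z| = 1` would satisfy `z⁻¹ = z̄`, so `a = z + z⁻¹ = 2 Re z ∈ [-2, 2]`.
-/

open ComplexConjugate in
theorem Complex.abs_le_two_of_sq_sub_mul_add_one_eq_zero {a : ℝ} {z : ℂ}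
    (hz : z ^ 2 - a * z + 1 = 0) (h1 : ‖z‖ = 1) : |a| ≤ 2 := by
  have hz0 : z ≠ 0 := norm_ne_zero_iff.mp (h1 ▸ one_ne_zero)
  have ha : (a : ℂ) = z + conj z := by
    rw [← Complex.inv_eq_conj h1]
    field_simp
    linear_combination -hz
  rw [Complex.add_conj, Complex.ofReal_inj] at ha
  calc |a| = 2 * |z.re| := by rw [ha, abs_mul, abs_two]
    _ ≤ 2 * ‖z‖ := by gcongr; exact Complex.abs_re_le_norm z
    _ = 2 := by rw [h1, mul_one]

theorem Polynomial.norm_ne_one_of_isRoot_X_sq_sub_C_mul_X_add_one {a : ℝ} (ha : 2 < |a|) {z : ℂ}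
    (hz : ((X ^ 2 - C a * X + 1 : ℝ[X]).map (algebraMap ℝ ℂ)).IsRoot z) : ‖z‖ ≠ 1 := by
  intro h1
  have := Complex.abs_le_two_of_sq_sub_mul_add_one_eq_zero (by simpa using hz) h1
  linarith

theorem two_lt_add_inv {t : ℝ} (ht : 0 < t) (ht1 : t ≠ 1) : 2 < t + t⁻¹ := by
  have hsq : 0 < (t - 1) ^ 2 / t := by
    have := sub_ne_zero.mpr ht1
    positivity
  calc 2 < 2 + (t - 1) ^ 2 / t := by linarith
    _ = t + t⁻¹ := by field_simp; ring

theorem Matrix.charpoly_fin_four_block {R : Type*} [CommRing R] (a b c d e f : R) :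
    (!![a,0,b,0; 0,c,0,0; d,0,e,0; 0,0,0,f]).charpoly
      = (X ^ 2 - C (a + e) * X + C (a * e - b * d)) * ((X - C c) * (X - C f)) := by
  rw [Matrix.charpoly, Matrix.det_succ_row_zero]
  simp [Fin.sum_univ_succ, Matrix.det_fin_three, Fin.succAbove, charmatrix_apply]
  ring

theorem Polynomial.X_sub_C_mul_X_sub_C_inv {K : Type*} [Field K] {t : K} (ht : t ≠ 0) :
    (X - C t) * (X - C t⁻¹) = X ^ 2 - C (t + t⁻¹) * X + 1 := by
  have h : C t * C t⁻¹ = 1 := by rw [← C_mul, mul_inv_cancel₀ ht, C_1]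
  rw [C_add]
  linear_combination h

theorem stmt_1_general (lam ν δ : ℝ) (hlam : 0 < lam ∧ lam < 1)
    (n : ℕ) (hn : 1 ≤ n) (hδnν : δ * n * ν ∉ Set.Icc (-4 : ℝ) 0)
    (Pi : Matrix (Fin 4) (Fin 4) ℝ)
    (hPi : Pi = !![1,0,0,0; 0,1,0,0; δ,0,1,0; 0,0,0,1])
    (Df : Matrix (Fin 4) (Fin 4) ℝ)
    (hDf : Df = !![1,0,(n:ℝ)*ν,0; 0,lam^n,0,0; 0,0,1,0; 0,0,0,(lam^n)⁻¹]) :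
    ∀ z : ℂ, ((Pi * Df).charpoly.map (algebraMap ℝ ℂ)).IsRoot z → ‖z‖ ≠ 1 := by
  set t := lam ^ n
  have ht0 : 0 < t := pow_pos hlam.1 n
  have ht1 : t ≠ 1 := (pow_lt_one₀ hlam.1.le hlam.2 (by omega)).ne
  have hprod : Pi * Df = !![1,0,n*ν,0; 0,t,0,0; δ,0,δ*(n*ν)+1,0; 0,0,0,t⁻¹] := by
    subst hPi hDf
    ext i j
    fin_cases i <;> fin_cases j <;> simp [Matrix.mul_apply, Fin.sum_univ_succ]
  have hchar : (Pi * Df).charpoly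
      = (X ^ 2 - C (δ * n * ν + 2) * X + 1) * (X ^ 2 - C (t + t⁻¹) * X + 1) := by
    rw [hprod, charpoly_fin_four_block, X_sub_C_mul_X_sub_C_inv ht0.ne']
    congr 1
    rw [show (1 : ℝ) + (δ * (n * ν) + 1) = δ * n * ν + 2 by ring,
      show (1 : ℝ) * (δ * (n * ν) + 1) - n * ν * δ = 1 by ring, C_1]
  have htrace : 2 < |δ * n * ν + 2| := by
    rw [Set.mem_Icc, not_and_or, not_le, not_le] at hδnν
    rw [lt_abs]
    rcases hδnν with h | h
    · right; linarith
    · left; linarith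
  have hsum : 2 < |t + t⁻¹| := (two_lt_add_inv ht0 ht1).trans_le (le_abs_self _)
  intro z hz
  rw [hchar, Polynomial.map_mul, root_mul] at hz
  rcases hz with hz | hz
  · exact norm_ne_one_of_isRoot_X_sq_sub_C_mul_X_add_one htrace hz
  · exact norm_ne_one_of_isRoot_X_sq_sub_C_mul_X_add_one hsum hz

theorem stmt_1 (lam ν δ : ℝ) (hlam : 0 < lam ∧ lam < 1) (hν : ν ≠ 0) (hδ : δ ≠ 0)
    (n : ℕ) (hn : 1 ≤ n) (hδnν : δ * n * ν ∉ Set.Icc (-4 : ℝ) 0)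
    (Pi : Matrix (Fin 4) (Fin 4) ℝ)
    (hPi : Pi = !![1,0,0,0; 0,1,0,0; δ,0,1,0; 0,0,0,1])
    (Df : Matrix (Fin 4) (Fin 4) ℝ)
    (hDf : Df = !![1,0,(n:ℝ)*ν,0; 0,lam^n,0,0; 0,0,1,0; 0,0,0,(lam^n)⁻¹]) :
    ∀ z : ℂ, ((Pi * Df).charpoly.map (algebraMap ℝ ℂ)).IsRoot z → ‖z‖ ≠ 1 :=
  stmt_1_general lam ν δ hlam n hn hδnν Pi hPi Df hDf
end

section
/- Let λ ∈ ℝ with 0 < λ < 1, δ ≠ 0, and ν = 0. Then for every n ≥ 1, the matrix Π · Df_n has 1 as an eigenvalue (with Π and Df_n as in the Arnold-model setup), hence is not hyperbolic. -/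
open Matrix Polynomial

/-! With `ν = 0` the product `Π · Df_n` fixes the first coordinate: its first row is the first unit
row, so the first row of `1 - Π · Df_n` vanishes and `1` is a root of the characteristic
polynomial, which remains a root of modulus one over `ℂ`. -/

theorem Matrix.isRoot_charpoly_of_row_eq_single {R n : Type*} [CommRing R] [Fintype n]
    [DecidableEq n] (M : Matrix n n R) {i : n} {a : R} (h : M i = Pi.single i a) :
    M.charpoly.IsRoot a := by
  rw [IsRoot, eval_charpoly]
  refine det_eq_zero_of_row_eq_zero i fun j => ?_
  rw [sub_apply, h]
  obtain rfl | hij := eq_or_ne i j <;> simp [*]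

theorem Polynomial.exists_isRoot_map_complex_norm_eq_one {p : ℝ[X]} (h : p.IsRoot 1) :
    ∃ z : ℂ, (p.map (algebraMap ℝ ℂ)).IsRoot z ∧ ‖z‖ = 1 :=
  ⟨1, by simpa using h.map (f := algebraMap ℝ ℂ), norm_one⟩

theorem stmt_3_general (lam ν δ : ℝ) (hν : ν = 0) :
    ∀ n : ℕ, 1 ≤ n →
      ∀ Pi Df : Matrix (Fin 4) (Fin 4) ℝ,
        Pi = !![1,0,0,0; 0,1,0,0; δ,0,1,0; 0,0,0,1] →
        Df = !![1,0,(n:ℝ)*ν,0; 0,lam^n,0,0; 0,0,1,0; 0,0,0,(lam^n)⁻¹] →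
        (Pi * Df).charpoly.IsRoot 1 ∧
          ¬ (∀ z : ℂ, ((Pi * Df).charpoly.map (algebraMap ℝ ℂ)).IsRoot z →
              ‖z‖ ≠ 1) := by
  intro n _ Pi Df hPi hDf
  have hrow : (Pi * Df) 0 = _root_.Pi.single 0 1 := by
    subst hPi hDf hν
    ext j
    fin_cases j <;> simp [mul_apply, Fin.sum_univ_succ]
  have hroot := (Pi * Df).isRoot_charpoly_of_row_eq_single hrow
  obtain ⟨z, hz, hz_norm⟩ := exists_isRoot_map_complex_norm_eq_one hroot
  exact ⟨hroot, fun h => h z hz hz_norm⟩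

theorem stmt_3 (lam ν δ : ℝ) (hlam : 0 < lam ∧ lam < 1) (hδ : δ ≠ 0) (hν : ν = 0) :
    ∀ n : ℕ, 1 ≤ n →
      ∀ Pi Df : Matrix (Fin 4) (Fin 4) ℝ,
        Pi = !![1,0,0,0; 0,1,0,0; δ,0,1,0; 0,0,0,1] →
        Df = !![1,0,(n:ℝ)*ν,0; 0,lam^n,0,0; 0,0,1,0; 0,0,0,(lam^n)⁻¹] →
        (Pi * Df).charpoly.IsRoot 1 ∧
          ¬ (∀ z : ℂ, ((Pi * Df).charpoly.map (algebraMap ℝ ℂ)).IsRoot z →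
              ‖z‖ ≠ 1) :=
  stmt_3_general lam ν δ hν
end

section
/- Let (A(n)) and (B(n)) be real sequences, λ ∈ (0,1), d ≠ 0, c ≠ 0 real constants, with A(n) ~ −d·λ^{−n} and B(n) ~ c·n·λ^{−n} as n → ∞. Then for all sufficiently large n, every root of the palindromic quartic x⁴ + A(n)x³ + B(n)x² + A(n)x + 1 is real. -/
open Polynomial Filter

lemma quad_im_aux (S : ℝ) (hS : 4 < S^2) (z : ℂ)
    (hz : z^2 - (S:ℂ)*z + 1 = 0) : z.im = 0 := by
  have him : (z^2 - (S:ℂ)*z + 1).im = 0 := by rw [hz]; rfl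
  have hre : (z^2 - (S:ℂ)*z + 1).re = 0 := by rw [hz]; rfl
  simp [Complex.add_im, Complex.sub_im, Complex.mul_im, Complex.add_re,
    Complex.sub_re, Complex.mul_re, pow_two] at him hre
  by_contra h
  have h1 : 2 * z.re - S = 0 := by
    rcases mul_eq_zero.mp (show z.im * (2*z.re - S) = 0 by linarith) with h' | h'
    · exact absurd h' h
    · exact h'
  nlinarith [sq_nonneg z.im, sq_nonneg z.re]

lemma key_aux (a b : ℝ) (h1 : 4*(b-2) ≤ a^2) (h2 : 4 + 2*|a| < |b-2|) (z : ℂ)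
    (hz : z^4 + (a:ℂ)*z^3 + (b:ℂ)*z^2 + (a:ℂ)*z + 1 = 0) : z.im = 0 := by
  set s : ℝ := Real.sqrt (a^2 - 4*(b-2)) with hs_def
  have hs : s^2 = a^2 - 4*(b-2) := Real.sq_sqrt (by linarith)
  set S1 : ℝ := (-a + s)/2 with hS1_def
  set S2 : ℝ := (-a - s)/2 with hS2_def
  have hsum : S1 + S2 = -a := by rw [hS1_def, hS2_def]; ring
  have hmul : S1 * S2 = b - 2 := by
    rw [hS1_def, hS2_def]; nlinarith [hs]
  have hfact : (z^2 - (S1:ℂ)*z + 1) * (z^2 - (S2:ℂ)*z + 1) = 0 := by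
    have e1 : ((S1:ℂ)) + (S2:ℂ) = -(a:ℂ) := by
      rw [← Complex.ofReal_add, hsum, Complex.ofReal_neg]
    have e2 : ((S1:ℂ)) * (S2:ℂ) = (b:ℂ) - 2 := by
      rw [← Complex.ofReal_mul, hmul]; push_cast; ring
    calc (z^2 - (S1:ℂ)*z + 1) * (z^2 - (S2:ℂ)*z + 1)
        = z^4 - ((S1:ℂ)+(S2:ℂ))*z^3 + ((S1:ℂ)*(S2:ℂ) + 2)*z^2
            - ((S1:ℂ)+(S2:ℂ))*z + 1 := by ring
      _ = z^4 + (a:ℂ)*z^3 + (b:ℂ)*z^2 + (a:ℂ)*z + 1 := by rw [e1, e2]; ring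
      _ = 0 := hz
  -- each Sᵢ satisfies Sᵢ² > 4
  have hbig : ∀ S : ℝ, S^2 + a*S + (b-2) = 0 → 4 < S^2 := by
    intro S hroot
    by_contra h
    push_neg at h
    have habsS : |S| ≤ 2 := by
      nlinarith [abs_nonneg S, sq_abs S]
    have : |b - 2| ≤ 4 + 2*|a| := by
      have e : b - 2 = -(S^2 + a*S) := by linarith
      rw [e, abs_neg]
      calc |S^2 + a*S| ≤ |S^2| + |a*S| := abs_add_le _ _
        _ = S^2 + |a| * |S| := by rw [abs_of_nonneg (sq_nonneg S), abs_mul]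
        _ ≤ 4 + 2*|a| := by
            have := mul_le_mul_of_nonneg_left habsS (abs_nonneg a)
            linarith
    linarith
  have hr1 : S1^2 + a*S1 + (b-2) = 0 := by
    rw [hS1_def]; linear_combination hs / 4
  have hr2 : S2^2 + a*S2 + (b-2) = 0 := by
    rw [hS2_def]; linear_combination hs / 4
  rcases mul_eq_zero.mp hfact with h | h
  · exact quad_im_aux S1 (hbig S1 hr1) z h
  · exact quad_im_aux S2 (hbig S2 hr2) z h

set_option maxHeartbeats 1000000 in
theorem stmt_6 (A B : ℕ → ℝ) (lam d c : ℝ)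
    (hlam : 0 < lam ∧ lam < 1) (hd : d ≠ 0) (hc : c ≠ 0)
    (hA : Tendsto (fun n => A n / (-d * (lam ^ n)⁻¹)) atTop (nhds 1))
    (hB : Tendsto (fun n => B n / (c * n * (lam ^ n)⁻¹)) atTop (nhds 1)) :
    ∀ᶠ n : ℕ in atTop, ∀ z : ℂ,
      (X^4 + C (A n : ℂ) * X^3 + C (B n : ℂ) * X^2 + C (A n : ℂ) * X + 1).IsRoot z →
        z.im = 0 := by
  obtain ⟨hlam0, hlam1⟩ := hlam
  have hpow_pos : ∀ n : ℕ, (0:ℝ) < lam ^ n := fun n => pow_pos hlam0 n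
  have hpow_le1 : ∀ n : ℕ, lam ^ n ≤ 1 := fun n => pow_le_one₀ hlam0.le hlam1.le
  -- ratio bounds
  have hAev : ∀ᶠ n : ℕ in atTop,
      |A n| ≥ |d| * (lam ^ n)⁻¹ / 2 ∧ |A n| ≤ 3/2 * (|d| * (lam ^ n)⁻¹) := by
    have := Metric.tendsto_atTop.mp hA (1/2) (by norm_num)
    obtain ⟨N, hN⟩ := this
    filter_upwards [eventually_ge_atTop N] with n hn
    have hdist := hN n hn
    rw [Real.dist_eq] at hdist
    have hden : -d * (lam ^ n)⁻¹ ≠ 0 := by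
      apply mul_ne_zero (neg_ne_zero.mpr hd)
      positivity
    have hAn : A n = (A n / (-d * (lam ^ n)⁻¹)) * (-d * (lam ^ n)⁻¹) := by
      field_simp
    have habs : |A n| = |A n / (-d * (lam ^ n)⁻¹)| * (|d| * (lam ^ n)⁻¹) := by
      rw [hAn, abs_mul, abs_mul, abs_neg, abs_of_pos (by positivity : (0:ℝ) < (lam ^ n)⁻¹)]
      rw [← hAn]
    rw [habs]
    have hrat1 : (1:ℝ)/2 ≤ |A n / (-d * (lam ^ n)⁻¹)| := by
      have h1 := abs_sub_abs_le_abs_sub (1:ℝ) (A n / (-d * (lam ^ n)⁻¹))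
      rw [abs_sub_comm] at h1
      simp only [abs_one] at h1
      linarith
    have hrat2 : |A n / (-d * (lam ^ n)⁻¹)| ≤ 3/2 := by
      have h1 := abs_sub_abs_le_abs_sub (A n / (-d * (lam ^ n)⁻¹)) (1:ℝ)
      simp only [abs_one] at h1
      linarith
    constructor
    · have hdp : 0 ≤ |d| * (lam ^ n)⁻¹ := by positivity
      nlinarith
    · have hdp : 0 ≤ |d| * (lam ^ n)⁻¹ := by positivity
      nlinarith
  have hBev : ∀ᶠ n : ℕ in atTop,
      |B n| ≥ |c| * n * (lam ^ n)⁻¹ / 2 ∧ |B n| ≤ 3/2 * (|c| * n * (lam ^ n)⁻¹) := by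
    have := Metric.tendsto_atTop.mp hB (1/2) (by norm_num)
    obtain ⟨N, hN⟩ := this
    filter_upwards [eventually_ge_atTop (max N 1)] with n hn
    have hn1 : 1 ≤ n := le_of_max_le_right hn
    have hdist := hN n (le_of_max_le_left hn)
    rw [Real.dist_eq] at hdist
    have hnpos : (0:ℝ) < (n:ℝ) := by exact_mod_cast hn1
    have hden : c * n * (lam ^ n)⁻¹ ≠ 0 := by
      apply mul_ne_zero (mul_ne_zero hc (by positivity))
      positivity
    have hBn : B n = (B n / (c * n * (lam ^ n)⁻¹)) * (c * n * (lam ^ n)⁻¹) := by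
      field_simp
    have habs : |B n| = |B n / (c * n * (lam ^ n)⁻¹)| * (|c| * n * (lam ^ n)⁻¹) := by
      rw [hBn, abs_mul, abs_mul, abs_mul, abs_of_pos hnpos,
        abs_of_pos (by positivity : (0:ℝ) < (lam ^ n)⁻¹)]
      rw [← hBn]
    rw [habs]
    have hrat1 : (1:ℝ)/2 ≤ |B n / (c * n * (lam ^ n)⁻¹)| := by
      have h1 := abs_sub_abs_le_abs_sub (1:ℝ) (B n / (c * n * (lam ^ n)⁻¹))
      rw [abs_sub_comm] at h1
      simp only [abs_one] at h1
      linarith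
    have hrat2 : |B n / (c * n * (lam ^ n)⁻¹)| ≤ 3/2 := by
      have h1 := abs_sub_abs_le_abs_sub (B n / (c * n * (lam ^ n)⁻¹)) (1:ℝ)
      simp only [abs_one] at h1
      linarith
    constructor
    · have hdp : 0 ≤ |c| * n * (lam ^ n)⁻¹ := by positivity
      nlinarith
    · have hdp : 0 ≤ |c| * n * (lam ^ n)⁻¹ := by positivity
      nlinarith
  -- smallness: 6|c| n λⁿ + 8 (λⁿ)² < d²/4 eventually
  have hsmall : ∀ᶠ n : ℕ in atTop,
      6*|c| * ((n:ℝ) * lam ^ n) + 8 * (lam ^ n)^2 < d^2/4 := by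
    have t1 : Tendsto (fun n : ℕ => 6*|c| * ((n:ℝ) * lam ^ n) + 8 * (lam ^ n)^2)
        atTop (nhds 0) := by
      have h1 := tendsto_self_mul_const_pow_of_lt_one hlam0.le hlam1
      have h2 := tendsto_pow_atTop_nhds_zero_of_lt_one hlam0.le hlam1
      have := ((h1.const_mul (6*|c|)).add ((h2.mul h2).const_mul 8))
      simpa [pow_two] using this
    have hd4 : (0:ℝ) < d^2/4 := by positivity
    exact t1.eventually (gt_mem_nhds hd4)
  -- n large enough: 6 + 3|d| < |c|/2 * n
  have hnbig : ∀ᶠ n : ℕ in atTop, 6 + 3*|d| < |c|/2 * n := by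
    have hcpos : 0 < |c|/2 := by positivity
    obtain ⟨N, hN⟩ := exists_nat_gt ((6 + 3*|d|) / (|c|/2))
    filter_upwards [eventually_ge_atTop N] with n hn
    have : ((6:ℝ) + 3*|d|) / (|c|/2) < n := lt_of_lt_of_le hN (by exact_mod_cast hn)
    calc 6 + 3*|d| = ((6 + 3*|d|) / (|c|/2)) * (|c|/2) := by field_simp
      _ < n * (|c|/2) := by apply mul_lt_mul_of_pos_right this hcpos
      _ = |c|/2 * n := by ring
  filter_upwards [hAev, hBev, hsmall, hnbig] with n ⟨hA1, hA2⟩ ⟨hB1, hB2⟩ hsm hnb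
  intro z hz
  have hpn := hpow_pos n
  have hpinv : (0:ℝ) < (lam ^ n)⁻¹ := by positivity
  have hpinv1 : (1:ℝ) ≤ (lam ^ n)⁻¹ := by
    have h := hpow_le1 n
    have hmc : lam ^ n * (lam ^ n)⁻¹ = 1 := mul_inv_cancel₀ (ne_of_gt hpn)
    nlinarith
  -- condition (i): 4*(B n - 2) ≤ (A n)^2
  have hi : 4*(B n - 2) ≤ (A n)^2 := by
    have e1 : (A n)^2 ≥ (d^2/4) * ((lam ^ n)⁻¹)^2 := by
      have := hA1
      nlinarith [sq_abs (A n), abs_nonneg (A n), sq_nonneg (|A n| - |d| * (lam ^ n)⁻¹ / 2), sq_abs d]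
    have e2 : 4*(B n - 2) ≤ 6*|c| * n * (lam ^ n)⁻¹ + 8 := by
      have := hB2
      have h := le_abs_self (B n)
      nlinarith
    have e3 : 6*|c| * n * (lam ^ n)⁻¹ + 8 ≤ (d^2/4) * ((lam ^ n)⁻¹)^2 := by
      have hmul := mul_le_mul_of_nonneg_right hsm.le (by positivity : (0:ℝ) ≤ ((lam ^ n)⁻¹)^2)
      have key : (6*|c| * ((n:ℝ) * lam ^ n) + 8 * (lam ^ n)^2) * ((lam ^ n)⁻¹)^2
          = 6*|c| * n * (lam ^ n)⁻¹ + 8 := by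
        field_simp
      rw [key] at hmul
      linarith
    linarith
  -- condition (ii): 4 + 2|A n| < |B n - 2|
  have hii : 4 + 2*|A n| < |B n - 2| := by
    have e1 : |B n - 2| ≥ |B n| - 2 := by
      have h := abs_sub_abs_le_abs_sub (B n) (2:ℝ)
      rw [abs_two] at h
      linarith
    have e2 : |B n| - 2 ≥ |c| * n * (lam ^ n)⁻¹ / 2 - 2 := by linarith
    have e3 : 4 + 2*|A n| ≤ 4 + 3*|d| * (lam ^ n)⁻¹ := by linarith
    have e4 : 4 + 3*|d| * (lam ^ n)⁻¹ < |c| * n * (lam ^ n)⁻¹ / 2 - 2 := by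
      have : (6 + 3*|d|) * (lam ^ n)⁻¹ < (|c|/2 * n) * (lam ^ n)⁻¹ :=
        mul_lt_mul_of_pos_right hnb hpinv
      nlinarith
    linarith
  -- conclude
  have hz' : z^4 + ((A n : ℝ):ℂ)*z^3 + ((B n : ℝ):ℂ)*z^2 + ((A n : ℝ):ℂ)*z + 1 = 0 := by
    have := hz
    simp [Polynomial.IsRoot, Polynomial.eval_add, Polynomial.eval_mul, Polynomial.eval_pow] at this
    linear_combination this
  exact key_aux (A n) (B n) hi hii z hz'
end

section
/- Let λ ∈ (0,1), ν ≠ 0, δ ≠ 0 with δν > 0. Then for every n ≥ 1, the four eigenvalues of the matrix Π·Df_n (Arnold-model case: Π with rows (1,0,0,0),(0,1,0,0),(δ,0,1,0),(0,0,0,1), Df_n with rows (1,0,nν,0),(0,λ^n,0,0),(0,0,1,0),(0,0,0,λ^{−n})) are real, and exactly two of them have absolute value > 1 while the other two have absolute value < 1. -/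
/-! The product `Π · Df_n` preserves the coordinate planes `{x₁, x₃}` and `{x₂, x₄}`: on the
first it acts by a matrix of trace `δnν + 2` and determinant `1`, on the second by
`diag(λⁿ, λ⁻ⁿ)`. A real quadratic `x² - Sx + 1` with `S > 2` has two positive roots with product
`1`, one on each side of `1`, and `λⁿ < 1 < λ⁻ⁿ` because `0 < λ < 1` and `n ≥ 1`. -/

open Matrix Polynomial

theorem Matrix.fin_four_transvection_mul {R : Type*} [Semiring R] (d c a b : R) :
    !![1,0,0,0; 0,1,0,0; d,0,1,0; 0,0,0,1] * !![1,0,c,0; 0,a,0,0; 0,0,1,0; 0,0,0,b] =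
      (!![1,0,c,0; 0,a,0,0; d,0,d*c+1,0; 0,0,0,b] : Matrix (Fin 4) (Fin 4) R) := by
  ext i j
  fin_cases i <;> fin_cases j <;> simp [Matrix.mul_apply, Fin.sum_univ_four]

theorem Matrix.charpoly_blockDiag_fin_four {R : Type*} [CommRing R] (p q r s a b : R) :
    (!![p,0,q,0; 0,a,0,0; r,0,s,0; 0,0,0,b] : Matrix (Fin 4) (Fin 4) R).charpoly =
      (X ^ 2 - C (p + s) * X + C (p * s - q * r)) * (X - C a) * (X - C b) := by
  rw [Matrix.charpoly, Matrix.det_succ_row_zero]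
  simp [Fin.sum_univ_succ, Matrix.det_fin_three, Matrix.submatrix, Fin.succAbove, charmatrix_apply]
  ring

theorem exists_factor_X_sq_sub_C_mul_X_add_one {S : ℝ} (hS : 2 < S) :
    ∃ u v : ℝ, 1 < u ∧ 0 < v ∧ v < 1 ∧ (X ^ 2 - C S * X + 1 : ℝ[X]) = (X - C u) * (X - C v) := by
  set D := √(S ^ 2 - 4)
  have hD : 0 ≤ D := Real.sqrt_nonneg _
  have hD_sq : D ^ 2 = S ^ 2 - 4 := Real.sq_sqrt (by nlinarith)
  have hD_lt : D < S := by nlinarith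
  refine ⟨(S + D) / 2, (S - D) / 2, by linarith, by linarith, by nlinarith, ?_⟩
  have hsum : (S + D) / 2 + (S - D) / 2 = S := by ring
  have hprod : (S + D) / 2 * ((S - D) / 2) = 1 := by nlinarith
  conv_lhs => rw [← hsum, ← C_1, ← hprod]
  simp only [map_add, map_mul]
  ring

theorem stmt_17_general (lam ν δ : ℝ) (hlam : 0 < lam ∧ lam < 1)
    (hδν : δ * ν > 0) :
    ∀ n : ℕ, 1 ≤ n →
      ∀ Pi' Df : Matrix (Fin 4) (Fin 4) ℝ,
        Pi' = !![1,0,0,0; 0,1,0,0; δ,0,1,0; 0,0,0,1] →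
        Df = !![1,0,(n:ℝ)*ν,0; 0,lam^n,0,0; 0,0,1,0; 0,0,0,(lam^n)⁻¹] →
        ∃ x₁ x₂ x₃ x₄ : ℝ,
          (Pi' * Df).charpoly = (X - C x₁) * (X - C x₂) * (X - C x₃) * (X - C x₄) ∧
          |x₁| > 1 ∧ |x₂| > 1 ∧ |x₃| < 1 ∧ |x₄| < 1 := by
  intro n hn Pi' Df hPi hDf
  set a := lam ^ n
  have ha_pos : 0 < a := pow_pos hlam.1 n
  have ha_lt : a < 1 := pow_lt_one₀ hlam.1.le hlam.2 (by omega)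
  have hS : 2 < δ * (n * ν) + 2 := by
    have : 0 < δ * (n * ν) := by
      rw [mul_left_comm]; exact mul_pos (by exact_mod_cast hn) hδν
    linarith
  obtain ⟨u, v, hu, hv_pos, hv_lt, huv⟩ := exists_factor_X_sq_sub_C_mul_X_add_one hS
  refine ⟨u, a⁻¹, v, a, ?_, ?_, ?_, ?_, ?_⟩
  · rw [hPi, hDf, Matrix.fin_four_transvection_mul, Matrix.charpoly_blockDiag_fin_four,
      show (1 : ℝ) + (δ * (n * ν) + 1) = δ * (n * ν) + 2 by ring,
      show 1 * (δ * (n * ν) + 1) - n * ν * δ = (1 : ℝ) by ring, C_1, huv]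
    ring
  · rwa [abs_of_pos (by linarith)]
  · rw [abs_of_pos (inv_pos.mpr ha_pos)]
    exact one_lt_inv₀ ha_pos |>.mpr ha_lt
  · rwa [abs_of_pos hv_pos]
  · rwa [abs_of_pos ha_pos]

theorem stmt_17 (lam ν δ : ℝ) (hlam : 0 < lam ∧ lam < 1) (hν : ν ≠ 0) (hδ : δ ≠ 0)
    (hδν : δ * ν > 0) :
    ∀ n : ℕ, 1 ≤ n →
      ∀ Pi' Df : Matrix (Fin 4) (Fin 4) ℝ,
        Pi' = !![1,0,0,0; 0,1,0,0; δ,0,1,0; 0,0,0,1] →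
        Df = !![1,0,(n:ℝ)*ν,0; 0,lam^n,0,0; 0,0,1,0; 0,0,0,(lam^n)⁻¹] →
        ∃ x₁ x₂ x₃ x₄ : ℝ,
          (Pi' * Df).charpoly = (X - C x₁) * (X - C x₂) * (X - C x₃) * (X - C x₄) ∧
          |x₁| > 1 ∧ |x₂| > 1 ∧ |x₃| < 1 ∧ |x₄| < 1 :=
  stmt_17_general lam ν δ hlam hδν
end
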